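/- arXiv:0708.2787 — 2 statements merged into one kernel-verified Lean document; each statement's English description precedes it below -/
import Mathlib

section
/- Let (d_n)_{n∈ℤ} be a sequence of positive reals and α ∈ (-1/2, 1/2). If there are constants C₁, C₂ > 0 with C₁(1+|n|)^(2α) ≤ d_n ≤ C₂(1+|n|)^(2α) for all n ∈ ℤ, then (d_n) satisfies the discrete Muckenhoupt condition: there exists C > 0 such that for every finite interval I of consecutive integers, (∑_{n∈I} d_n)(∑_{n∈I} d_n⁻¹) ≤ C·|I|². -/
open Finset

/-- Bernoulli consequence: `s * x ^ (s-1) ≤ x ^ s - (x-1) ^ s` for `0 < s ≤ 1`, `1 ≤ x`. -/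
private lemma bern_aux {s x : ℝ} (hs0 : 0 < s) (hs1 : s ≤ 1) (hx : 1 ≤ x) :
    s * x ^ (s - 1) ≤ x ^ s - (x - 1) ^ s := by
  have hx0 : (0:ℝ) < x := lt_of_lt_of_le one_pos hx
  have hu : (-1:ℝ) ≤ -(1/x) := by
    have : 1/x ≤ 1 := (div_le_one hx0).mpr hx
    linarith
  have h := rpow_one_add_le_one_add_mul_self hu hs0.le hs1
  have h1 : (1 + -(1/x)) = (x-1)/x := by field_simp; ring
  rw [h1, Real.div_rpow (by linarith) hx0.le] at h
  have hxs : (0:ℝ) < x ^ s := Real.rpow_pos_of_pos hx0 s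
  have h2 : (x-1)^s ≤ (1 + s * -(1/x)) * x ^ s := (div_le_iff₀ hxs).mp h
  have h3 : x ^ (s - 1) = x ^ s / x := by
    rw [Real.rpow_sub hx0, Real.rpow_one]
  rw [h3]
  have h4 : (1 + s * -(1/x)) * x ^ s = x ^ s - s * (x ^ s / x) := by
    field_simp; ring
  rw [h4] at h2
  linarith

/-- Telescoping estimate: `∑_{n=0}^{q} (1+n)^{-t} ≤ (q+1)^{1-t}/(1-t)`. -/
private lemma tele_aux {t : ℝ} (ht0 : 0 ≤ t) (ht1 : t < 1) :
    ∀ q : ℤ, 0 ≤ q →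
      ∑ n ∈ Finset.Icc (0:ℤ) q, (1 + (n:ℝ)) ^ (-t) ≤ ((q:ℝ) + 1) ^ (1 - t) / (1 - t) := by
  have hs0 : (0:ℝ) < 1 - t := by linarith
  refine Int.le_induction ?_ ?_
  · have h : Finset.Icc (0:ℤ) 0 = {0} := rfl
    rw [h, Finset.sum_singleton]
    norm_num
    have hinv : (1 - t) * (1-t)⁻¹ = 1 := mul_inv_cancel₀ hs0.ne'
    nlinarith [mul_nonneg ht0 (inv_nonneg.mpr hs0.le)]
  · intro q hq ih
    have hins : Finset.Icc (0:ℤ) (q+1) = insert (q+1) (Finset.Icc 0 q) := by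
      ext n; simp only [Finset.mem_Icc, Finset.mem_insert]; omega
    rw [hins, Finset.sum_insert (by simp only [Finset.mem_Icc]; omega)]
    have hq' : (0:ℝ) ≤ (q:ℝ) := by exact_mod_cast hq
    have hb := bern_aux (s := 1-t) (x := (q:ℝ)+2) hs0 (by linarith) (by linarith)
    have e1 : (1:ℝ) - t - 1 = -t := by ring
    have e2 : ((q:ℝ)+2) - 1 = (q:ℝ)+1 := by ring
    rw [e1, e2] at hb
    have hcast : (1 + ((q+1:ℤ):ℝ)) = (q:ℝ) + 2 := by push_cast; ring
    have hcast2 : (((q+1:ℤ)):ℝ) + 1 = (q:ℝ) + 2 := by push_cast; ring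
    rw [hcast, hcast2]
    rw [le_div_iff₀ hs0]
    have ih' : (∑ n ∈ Finset.Icc (0:ℤ) q, (1 + (n:ℝ)) ^ (-t)) * (1 - t)
        ≤ ((q:ℝ) + 1) ^ (1 - t) := by
      rw [← le_div_iff₀ hs0]; exact ih
    nlinarith [hb, ih']

/-- Shifted estimate: for `0 ≤ p ≤ q`, `∑_{n=p}^{q} (1+n)^{-t} ≤ (q-p+1)^{1-t}/(1-t)`. -/
private lemma shift_aux {t : ℝ} (ht0 : 0 ≤ t) (ht1 : t < 1) {p q : ℤ} (hp : 0 ≤ p)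
    (hpq : p ≤ q) :
    ∑ n ∈ Finset.Icc p q, (1 + (n:ℝ)) ^ (-t) ≤ ((q:ℝ) - (p:ℝ) + 1) ^ (1 - t) / (1 - t) := by
  have hmap : Finset.Icc p q = (Finset.Icc (0:ℤ) (q-p)).map (addLeftEmbedding p) := by
    rw [Finset.map_add_left_Icc]; congr 1 <;> omega
  have h1 : ∑ n ∈ Finset.Icc p q, (1 + (n:ℝ)) ^ (-t)
      ≤ ∑ m ∈ Finset.Icc (0:ℤ) (q - p), (1 + (m:ℝ)) ^ (-t) := by
    rw [hmap, Finset.sum_map]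
    apply Finset.sum_le_sum
    intro m hm
    simp only [Finset.mem_Icc] at hm
    have hm0 : (0:ℝ) ≤ (m:ℝ) := by exact_mod_cast hm.1
    have hp0 : (0:ℝ) ≤ (p:ℝ) := by exact_mod_cast hp
    apply Real.rpow_le_rpow_of_nonpos (by linarith)
    · rw [addLeftEmbedding_apply]; push_cast; linarith
    · linarith
  have h2 := tele_aux ht0 ht1 (q - p) (by omega)
  have hc : ((q - p : ℤ):ℝ) + 1 = (q:ℝ) - (p:ℝ) + 1 := by push_cast; ring
  rw [hc] at h2
  exact h1.trans h2

private lemma half_aux {t x : ℝ} (ht0 : 0 ≤ t) (ht1 : t ≤ 1) (hx : 0 < x) :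
    (x/2) ^ (-t) ≤ 2 * x ^ (-t) := by
  have h1 : (x/2) ^ (-t) = x ^ (-t) * 2 ^ t := by
    rw [Real.div_rpow hx.le (by norm_num), Real.rpow_neg (by norm_num : (0:ℝ) ≤ 2),
      div_eq_mul_inv, inv_inv]
  rw [h1]
  have h2 : (2:ℝ) ^ t ≤ 2 := by
    calc (2:ℝ) ^ t ≤ (2:ℝ) ^ (1:ℝ) :=
          Real.rpow_le_rpow_of_exponent_le (by norm_num) ht1
      _ = 2 := Real.rpow_one 2
  have h3 : (0:ℝ) ≤ x ^ (-t) := Real.rpow_nonneg hx.le _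
  nlinarith

/-- Main one-sided estimate for the inverse weight, nonnegative interval. -/
private lemma right_aux {t : ℝ} (ht0 : 0 ≤ t) (ht1 : t < 1) {p q : ℤ} (hp : 0 ≤ p)
    (hpq : p ≤ q) :
    ∑ n ∈ Finset.Icc p q, (1 + (n:ℝ)) ^ (-t) ≤
      2 / (1 - t) * ((q:ℝ) - (p:ℝ) + 1) * (1 + (q:ℝ)) ^ (-t) := by
  have hs0 : (0:ℝ) < 1 - t := by linarith
  have hp0 : (0:ℝ) ≤ (p:ℝ) := by exact_mod_cast hp
  have hpq' : (p:ℝ) ≤ (q:ℝ) := by exact_mod_cast hpq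
  set N : ℝ := (q:ℝ) - (p:ℝ) + 1 with hN
  have hN1 : (1:ℝ) ≤ N := by simp [hN]; linarith
  have hq1 : (0:ℝ) < 1 + (q:ℝ) := by linarith
  rcases le_or_gt (1 + (q:ℝ)) (2 * N) with hcase | hcase
  · -- N is comparable to 1+q
    have h1 := shift_aux ht0 ht1 hp hpq
    have h2 : N ^ (1 - t) = N * N ^ (-t) := by
      rw [show (1:ℝ) - t = 1 + (-t) by ring, Real.rpow_add (by linarith), Real.rpow_one]
    have h3 : N ^ (-t) ≤ ((1 + (q:ℝ))/2) ^ (-t) := by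
      apply Real.rpow_le_rpow_of_nonpos (by linarith) (by linarith) (by linarith)
    have h4 : ((1 + (q:ℝ))/2) ^ (-t) ≤ 2 * (1 + (q:ℝ)) ^ (-t) :=
      half_aux ht0 ht1.le hq1
    calc ∑ n ∈ Finset.Icc p q, (1 + (n:ℝ)) ^ (-t)
        ≤ N ^ (1 - t) / (1 - t) := h1
      _ = N * N ^ (-t) / (1 - t) := by rw [h2]
      _ ≤ N * (2 * (1 + (q:ℝ)) ^ (-t)) / (1 - t) := by
          gcongr
          exact h3.trans h4
      _ = 2 / (1 - t) * N * (1 + (q:ℝ)) ^ (-t) := by ring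
  · -- interval is far from 0 : every term is comparable to the last one
    have hterm : ∀ n ∈ Finset.Icc p q, (1 + (n:ℝ)) ^ (-t) ≤ 2 * (1 + (q:ℝ)) ^ (-t) := by
      intro n hn
      simp only [Finset.mem_Icc] at hn
      have hn1 : (p:ℝ) ≤ (n:ℝ) := by exact_mod_cast hn.1
      have hkey : (1 + (q:ℝ))/2 ≤ 1 + (n:ℝ) := by
        simp only [hN] at hcase; linarith
      calc (1 + (n:ℝ)) ^ (-t) ≤ ((1 + (q:ℝ))/2) ^ (-t) :=
            Real.rpow_le_rpow_of_nonpos (by linarith) hkey (by linarith)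
        _ ≤ 2 * (1 + (q:ℝ)) ^ (-t) := half_aux ht0 ht1.le hq1
    have hcard : ((Finset.Icc p q).card : ℝ) = N := by
      rw [Int.card_Icc]
      have : ((q + 1 - p).toNat : ℤ) = q + 1 - p := Int.toNat_of_nonneg (by omega)
      have : ((q + 1 - p).toNat : ℝ) = (q:ℝ) + 1 - (p:ℝ) := by exact_mod_cast this
      rw [this, hN]; ring
    calc ∑ n ∈ Finset.Icc p q, (1 + (n:ℝ)) ^ (-t)
        ≤ (Finset.Icc p q).card • (2 * (1 + (q:ℝ)) ^ (-t)) :=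
          Finset.sum_le_card_nsmul _ _ _ hterm
      _ = N * (2 * (1 + (q:ℝ)) ^ (-t)) := by rw [nsmul_eq_mul, hcard]
      _ ≤ 2 / (1 - t) * N * (1 + (q:ℝ)) ^ (-t) := by
          have h0 : (0:ℝ) ≤ (1 + (q:ℝ)) ^ (-t) := Real.rpow_nonneg hq1.le _
          have h5 : (2:ℝ) ≤ 2 / (1 - t) := by
            rw [le_div_iff₀ hs0]; nlinarith
          nlinarith [mul_nonneg (mul_nonneg (by linarith : (0:ℝ) ≤ 2/(1-t) - 2) (by linarith : (0:ℝ) ≤ N)) h0]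


/-- Reflection of a sum depending only on `|n|`. -/
private lemma reflect_aux (f : ℝ → ℝ) (p q : ℤ) :
    ∑ n ∈ Finset.Icc p q, f |(n:ℝ)| = ∑ m ∈ Finset.Icc (-q) (-p), f |(m:ℝ)| := by
  refine Finset.sum_nbij' (fun n => -n) (fun m => -m) ?_ ?_ ?_ ?_ ?_
  · intro a ha; simp only [Finset.mem_Icc] at *; omega
  · intro a ha; simp only [Finset.mem_Icc] at *; omega
  · intro a _; ring
  · intro a _; ring
  · intro a _; push_cast; rw [abs_neg]

/-- Inverse-weight sum bound on nonnegative intervals, with absolute values. -/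
private lemma sumInvAbs_nonneg {t : ℝ} (ht0 : 0 ≤ t) (ht1 : t < 1) {p q : ℤ}
    (hp : 0 ≤ p) (hpq : p ≤ q) :
    ∑ n ∈ Finset.Icc p q, (1 + |(n:ℝ)|) ^ (-t) ≤
      2 / (1 - t) * ((q:ℝ) - (p:ℝ) + 1) * (1 + (q:ℝ)) ^ (-t) := by
  have habs : ∀ n ∈ Finset.Icc p q, (1 + |(n:ℝ)|) ^ (-t) = (1 + (n:ℝ)) ^ (-t) := by
    intro n hn
    simp only [Finset.mem_Icc] at hn
    rw [abs_of_nonneg (by exact_mod_cast (hp.trans hn.1 : (0:ℤ) ≤ n))]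
  rw [Finset.sum_congr rfl habs]
  exact right_aux ht0 ht1 hp hpq

/-- Inverse-weight sum bound for arbitrary intervals. -/
private lemma sumInv_aux {t : ℝ} (ht0 : 0 ≤ t) (ht1 : t < 1) {p q : ℤ} (hpq : p ≤ q) :
    ∑ n ∈ Finset.Icc p q, (1 + |(n:ℝ)|) ^ (-t) ≤
      2 / (1 - t) * ((q:ℝ) - (p:ℝ) + 1) * (1 + max |(p:ℝ)| |(q:ℝ)|) ^ (-t) := by
  have hs0 : (0:ℝ) < 1 - t := by linarith
  rcases le_or_gt 0 p with hp | hp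
  · have hM : max |(p:ℝ)| |(q:ℝ)| = (q:ℝ) := by
      have hp0 : (0:ℝ) ≤ (p:ℝ) := by exact_mod_cast hp
      have hq0 : (0:ℝ) ≤ (q:ℝ) := by exact_mod_cast hp.trans hpq
      rw [abs_of_nonneg hp0, abs_of_nonneg hq0]
      exact max_eq_right (by exact_mod_cast hpq)
    rw [hM]
    exact sumInvAbs_nonneg ht0 ht1 hp hpq
  rcases le_or_gt q 0 with hq | hq
  · -- reflect to a nonnegative interval
    rw [reflect_aux (fun x => (1 + x) ^ (-t)) p q]
    have h := sumInvAbs_nonneg ht0 ht1 (p := -q) (q := -p) (by omega) (by omega)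
    have hM : max |(p:ℝ)| |(q:ℝ)| = ((-p : ℤ):ℝ) := by
      have hp0 : (p:ℝ) ≤ 0 := by exact_mod_cast hp.le
      have hq0 : (q:ℝ) ≤ 0 := by exact_mod_cast hq
      rw [abs_of_nonpos hp0, abs_of_nonpos hq0]
      push_cast
      exact max_eq_left (by exact_mod_cast neg_le_neg hpq)
    rw [hM]
    have e : ((-p : ℤ):ℝ) - ((-q : ℤ):ℝ) + 1 = (q:ℝ) - (p:ℝ) + 1 := by push_cast; ring
    rw [e] at h
    have e2 : (1 : ℝ) + ((-p : ℤ):ℝ) = ((-p:ℤ):ℝ) + 1 := by ring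
    exact h.trans_eq (by push_cast; ring_nf)
  · -- interval contains 0 in its interior: split into two pieces
    have hp1 : p ≤ -1 := by omega
    have hq1 : 1 ≤ q := by omega
    have hp0 : (p:ℝ) ≤ -1 := by exact_mod_cast hp1
    have hq0 : (1:ℝ) ≤ (q:ℝ) := by exact_mod_cast hq1
    have hsplit : Finset.Icc p q = Finset.Icc p (-1) ∪ Finset.Icc 0 q := by
      ext n; simp only [Finset.mem_Icc, Finset.mem_union]; omega
    have hdisj : Disjoint (Finset.Icc p (-1)) (Finset.Icc (0:ℤ) q) := by
      rw [Finset.disjoint_left]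
      intro a ha hb; simp only [Finset.mem_Icc] at *; omega
    rw [hsplit, Finset.sum_union hdisj]
    set M : ℝ := max |(p:ℝ)| |(q:ℝ)| with hMdef
    have habsp : |(p:ℝ)| = -(p:ℝ) := abs_of_nonpos (by linarith)
    have habsq : |(q:ℝ)| = (q:ℝ) := abs_of_nonneg (by linarith)
    have hMp : -(p:ℝ) ≤ M := by rw [hMdef, habsp]; exact le_max_left _ _
    have hMq : (q:ℝ) ≤ M := by rw [hMdef, habsq]; exact le_max_right _ _
    have hM1 : (1:ℝ) ≤ M := by linarith
    have hM2 : M ≤ (q:ℝ) - (p:ℝ) := by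
      rw [hMdef, habsp, habsq]
      exact max_le (by linarith) (by linarith)
    have hS1 : ∑ n ∈ Finset.Icc p (-1), (1 + |(n:ℝ)|) ^ (-t)
        ≤ (1 + M) ^ (1 - t) / (1 - t) := by
      rw [reflect_aux (fun x => (1 + x) ^ (-t)) p (-1), show -(-1:ℤ) = 1 by norm_num]
      have habs : ∀ m ∈ Finset.Icc (1:ℤ) (-p),
          (1 + |(m:ℝ)|) ^ (-t) = (1 + (m:ℝ)) ^ (-t) := by
        intro m hm; simp only [Finset.mem_Icc] at hm
        rw [abs_of_nonneg (by exact_mod_cast (by omega : (0:ℤ) ≤ m))]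
      rw [Finset.sum_congr rfl habs]
      have h := shift_aux ht0 ht1 (p := 1) (q := -p) (by omega) (by omega)
      have e : ((-p : ℤ):ℝ) - ((1:ℤ):ℝ) + 1 = -(p:ℝ) := by push_cast; ring
      rw [e] at h
      refine h.trans ?_
      have hbase : (-(p:ℝ)) ^ (1 - t) ≤ (1 + M) ^ (1 - t) :=
        Real.rpow_le_rpow (by linarith) (by linarith) (by linarith)
      exact div_le_div_of_nonneg_right hbase hs0.le |>.trans_eq rfl
    have hS2 : ∑ n ∈ Finset.Icc (0:ℤ) q, (1 + |(n:ℝ)|) ^ (-t)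
        ≤ (1 + M) ^ (1 - t) / (1 - t) := by
      have habs : ∀ n ∈ Finset.Icc (0:ℤ) q,
          (1 + |(n:ℝ)|) ^ (-t) = (1 + (n:ℝ)) ^ (-t) := by
        intro n hn; simp only [Finset.mem_Icc] at hn
        rw [abs_of_nonneg (by exact_mod_cast hn.1)]
      rw [Finset.sum_congr rfl habs]
      have h := tele_aux ht0 ht1 q (by omega)
      refine h.trans ?_
      have hbase : ((q:ℝ) + 1) ^ (1 - t) ≤ (1 + M) ^ (1 - t) :=
        Real.rpow_le_rpow (by linarith) (by linarith) (by linarith)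
      exact div_le_div_of_nonneg_right hbase hs0.le |>.trans_eq rfl
    have hsplitpow : (1 + M) ^ ((1:ℝ) - t) = (1 + M) * (1 + M) ^ (-t) := by
      rw [show (1:ℝ) - t = 1 + (-t) by ring, Real.rpow_add (by linarith), Real.rpow_one]
    have h0 : (0:ℝ) ≤ (1 + M) ^ (-t) := Real.rpow_nonneg (by linarith) _
    have ha : (0:ℝ) ≤ 2 / (1 - t) := div_nonneg (by norm_num) hs0.le
    calc ∑ n ∈ Finset.Icc p (-1), (1 + |(n:ℝ)|) ^ (-t)
          + ∑ n ∈ Finset.Icc (0:ℤ) q, (1 + |(n:ℝ)|) ^ (-t)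
        ≤ (1 + M) ^ ((1:ℝ) - t) / (1 - t) + (1 + M) ^ ((1:ℝ) - t) / (1 - t) :=
          add_le_add hS1 hS2
      _ = 2 / (1 - t) * ((1 + M) * (1 + M) ^ (-t)) := by rw [hsplitpow]; ring
      _ ≤ 2 / (1 - t) * (((q:ℝ) - (p:ℝ) + 1) * (1 + M) ^ (-t)) := by
          refine mul_le_mul_of_nonneg_left ?_ ha
          exact mul_le_mul_of_nonneg_right (by linarith) h0
      _ = 2 / (1 - t) * ((q:ℝ) - (p:ℝ) + 1) * (1 + M) ^ (-t) := by ring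

/-- Direct-weight sum bound. -/
private lemma sumPow_aux {t : ℝ} (ht0 : 0 ≤ t) {p q : ℤ} (hpq : p ≤ q) :
    ∑ n ∈ Finset.Icc p q, (1 + |(n:ℝ)|) ^ t ≤
      ((q:ℝ) - (p:ℝ) + 1) * (1 + max |(p:ℝ)| |(q:ℝ)|) ^ t := by
  have hterm : ∀ n ∈ Finset.Icc p q,
      (1 + |(n:ℝ)|) ^ t ≤ (1 + max |(p:ℝ)| |(q:ℝ)|) ^ t := by
    intro n hn
    simp only [Finset.mem_Icc] at hn
    have h1 : (p:ℝ) ≤ (n:ℝ) := by exact_mod_cast hn.1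
    have h2 : (n:ℝ) ≤ (q:ℝ) := by exact_mod_cast hn.2
    have habs : |(n:ℝ)| ≤ max |(p:ℝ)| |(q:ℝ)| := abs_le_max_abs_abs h1 h2
    exact Real.rpow_le_rpow (by positivity) (by linarith) ht0
  have hcard : ((Finset.Icc p q).card : ℝ) = (q:ℝ) - (p:ℝ) + 1 := by
    rw [Int.card_Icc]
    have h1 : ((q + 1 - p).toNat : ℤ) = q + 1 - p := Int.toNat_of_nonneg (by omega)
    have h2 : ((q + 1 - p).toNat : ℝ) = (q:ℝ) + 1 - (p:ℝ) := by exact_mod_cast h1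
    rw [h2]; ring
  calc ∑ n ∈ Finset.Icc p q, (1 + |(n:ℝ)|) ^ t
      ≤ (Finset.Icc p q).card • (1 + max |(p:ℝ)| |(q:ℝ)|) ^ t :=
        Finset.sum_le_card_nsmul _ _ _ hterm
    _ = ((q:ℝ) - (p:ℝ) + 1) * (1 + max |(p:ℝ)| |(q:ℝ)|) ^ t := by
        rw [nsmul_eq_mul, hcard]

/-- Product bound for the pure power weight. -/
private lemma prod_aux {t : ℝ} (ht0 : 0 ≤ t) (ht1 : t < 1) {p q : ℤ} (hpq : p ≤ q) :
    (∑ n ∈ Finset.Icc p q, (1 + |(n:ℝ)|) ^ t) *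
      (∑ n ∈ Finset.Icc p q, (1 + |(n:ℝ)|) ^ (-t)) ≤
      2 / (1 - t) * ((q:ℝ) - (p:ℝ) + 1) ^ 2 := by
  have hs0 : (0:ℝ) < 1 - t := by linarith
  set M : ℝ := max |(p:ℝ)| |(q:ℝ)| with hMdef
  have hM0 : (0:ℝ) ≤ M := le_trans (abs_nonneg _) (le_max_left _ _)
  set N : ℝ := (q:ℝ) - (p:ℝ) + 1 with hNdef
  have hpq' : (p:ℝ) ≤ (q:ℝ) := by exact_mod_cast hpq
  have hN1 : (1:ℝ) ≤ N := by rw [hNdef]; linarith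
  have h1 := sumPow_aux ht0 hpq
  have h2 := sumInv_aux ht0 ht1 hpq
  have hinv0 : (0:ℝ) ≤ ∑ n ∈ Finset.Icc p q, (1 + |(n:ℝ)|) ^ (-t) :=
    Finset.sum_nonneg fun n _ => Real.rpow_nonneg (by positivity) _
  have hpow0 : (0:ℝ) ≤ N * (1 + M) ^ t :=
    mul_nonneg (by linarith) (Real.rpow_nonneg (by linarith) _)
  have hcancel : (1 + M) ^ t * (1 + M) ^ (-t) = 1 := by
    rw [← Real.rpow_add (by linarith), add_neg_cancel, Real.rpow_zero]
  calc (∑ n ∈ Finset.Icc p q, (1 + |(n:ℝ)|) ^ t) *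
        (∑ n ∈ Finset.Icc p q, (1 + |(n:ℝ)|) ^ (-t))
      ≤ (N * (1 + M) ^ t) * (2 / (1 - t) * N * (1 + M) ^ (-t)) :=
        mul_le_mul h1 h2 hinv0 hpow0
    _ = 2 / (1 - t) * N ^ 2 * ((1 + M) ^ t * (1 + M) ^ (-t)) := by ring
    _ = 2 / (1 - t) * N ^ 2 := by rw [hcancel, mul_one]

/-- Product bound for a signed exponent. -/
private lemma prod_aux' {β : ℝ} (hβ : |β| < 1) {p q : ℤ} (hpq : p ≤ q) :
    (∑ n ∈ Finset.Icc p q, (1 + |(n:ℝ)|) ^ β) *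
      (∑ n ∈ Finset.Icc p q, (1 + |(n:ℝ)|) ^ (-β)) ≤
      2 / (1 - |β|) * ((q:ℝ) - (p:ℝ) + 1) ^ 2 := by
  rcases le_or_gt 0 β with h | h
  · have := prod_aux (t := β) h (by rwa [abs_of_nonneg h] at hβ) hpq
    rwa [abs_of_nonneg h]
  · have h2 := prod_aux (t := -β) (by linarith) (by rwa [abs_of_neg h] at hβ) hpq
    rw [neg_neg] at h2
    rw [abs_of_neg h]
    linarith [h2, mul_comm (∑ n ∈ Finset.Icc p q, (1 + |(n:ℝ)|) ^ β)
      (∑ n ∈ Finset.Icc p q, (1 + |(n:ℝ)|) ^ (-β))]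

theorem stmt_4 (d : ℤ → ℝ) (hd : ∀ n, 0 < d n) (α : ℝ)
    (hα₁ : -(1/2) < α) (hα₂ : α < 1/2) (C₁ C₂ : ℝ) (hC₁ : 0 < C₁) (hC₂ : 0 < C₂)
    (hbound : ∀ n : ℤ, C₁ * (1 + |(n : ℝ)|) ^ (2*α) ≤ d n ∧
                        d n ≤ C₂ * (1 + |(n : ℝ)|) ^ (2*α)) :
    ∃ C > 0, ∀ p q : ℤ, p ≤ q →
      (∑ n ∈ Finset.Icc p q, d n) * (∑ n ∈ Finset.Icc p q, (d n)⁻¹) ≤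
        C * ((q - p + 1 : ℤ) : ℝ) ^ 2 := by
  have hβ : |2 * α| < 1 := abs_lt.mpr ⟨by linarith, by linarith⟩
  have hs0 : (0:ℝ) < 1 - |2 * α| := by linarith [abs_nonneg (2*α)]
  refine ⟨C₂ * C₁⁻¹ * (2 / (1 - |2 * α|)), by positivity, ?_⟩
  intro p q hpq
  have hA : ∑ n ∈ Finset.Icc p q, d n
      ≤ C₂ * ∑ n ∈ Finset.Icc p q, (1 + |(n:ℝ)|) ^ (2*α) := by
    rw [Finset.mul_sum]
    exact Finset.sum_le_sum fun n _ => (hbound n).2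
  have hB : ∑ n ∈ Finset.Icc p q, (d n)⁻¹
      ≤ C₁⁻¹ * ∑ n ∈ Finset.Icc p q, (1 + |(n:ℝ)|) ^ (-(2*α)) := by
    rw [Finset.mul_sum]
    refine Finset.sum_le_sum fun n _ => ?_
    have hpos : (0:ℝ) < C₁ * (1 + |(n:ℝ)|) ^ (2*α) := by
      have : (0:ℝ) < (1 + |(n:ℝ)|) ^ (2*α) := Real.rpow_pos_of_pos (by positivity) _
      positivity
    have h1 : (d n)⁻¹ ≤ (C₁ * (1 + |(n:ℝ)|) ^ (2*α))⁻¹ :=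
      inv_anti₀ hpos (hbound n).1
    rwa [mul_inv, ← Real.rpow_neg (by positivity)] at h1
  have hA0 : (0:ℝ) ≤ ∑ n ∈ Finset.Icc p q, (d n)⁻¹ :=
    Finset.sum_nonneg fun n _ => (inv_pos.mpr (hd n)).le
  have hB0 : (0:ℝ) ≤ C₂ * ∑ n ∈ Finset.Icc p q, (1 + |(n:ℝ)|) ^ (2*α) :=
    mul_nonneg hC₂.le (Finset.sum_nonneg fun n _ => Real.rpow_nonneg (by positivity) _)
  have hcast : ((q - p + 1 : ℤ) : ℝ) = (q:ℝ) - (p:ℝ) + 1 := by push_cast; ring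
  have hprod := prod_aux' hβ hpq
  calc (∑ n ∈ Finset.Icc p q, d n) * (∑ n ∈ Finset.Icc p q, (d n)⁻¹)
      ≤ (C₂ * ∑ n ∈ Finset.Icc p q, (1 + |(n:ℝ)|) ^ (2*α)) *
          (C₁⁻¹ * ∑ n ∈ Finset.Icc p q, (1 + |(n:ℝ)|) ^ (-(2*α))) :=
        mul_le_mul hA hB hA0 hB0
    _ = C₂ * C₁⁻¹ * ((∑ n ∈ Finset.Icc p q, (1 + |(n:ℝ)|) ^ (2*α)) *
          (∑ n ∈ Finset.Icc p q, (1 + |(n:ℝ)|) ^ (-(2*α)))) := by ring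
    _ ≤ C₂ * C₁⁻¹ * (2 / (1 - |2 * α|) * ((q:ℝ) - (p:ℝ) + 1) ^ 2) := by
        refine mul_le_mul_of_nonneg_left hprod (by positivity)
    _ = C₂ * C₁⁻¹ * (2 / (1 - |2 * α|)) * ((q - p + 1 : ℤ) : ℝ) ^ 2 := by
        rw [hcast]; ring
end

section
/- Let (d_n)_{n∈ℤ} be positive reals with the discrete Muckenhoupt condition with constant C, let (e_k)_{k∈ℤ} be positive reals, and suppose: (a) there is an increasing map k ↦ n_k from ℤ to ℤ with n_{k+1} - n_k ≤ N for some integer N ≥ 1, and (b) there is M ≥ 1 with M⁻¹ d_{n_k} ≤ e_k ≤ M d_{n_k} for all k. Then (e_k)_{k∈ℤ} satisfies the discrete Muckenhoupt condition with some constant depending only on C, M, N. -/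
theorem stmt_9 (d e : ℤ → ℝ) (hd : ∀ n, 0 < d n) (he : ∀ k, 0 < e k)
    (C : ℝ) (hC : 0 < C)
    (hA2 : ∀ p q : ℤ, p ≤ q →
      (∑ n ∈ Finset.Icc p q, d n) * (∑ n ∈ Finset.Icc p q, (d n)⁻¹) ≤
        C * ((q - p + 1 : ℤ) : ℝ) ^ 2)
    (nk : ℤ → ℤ) (hnk : StrictMono nk) (N : ℤ) (hN : 1 ≤ N)
    (hgap : ∀ k : ℤ, nk (k+1) - nk k ≤ N)
    (M : ℝ) (hM : 1 ≤ M)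
    (hcomp : ∀ k : ℤ, M⁻¹ * d (nk k) ≤ e k ∧ e k ≤ M * d (nk k)) :
    ∀ p q : ℤ, p ≤ q →
      (∑ k ∈ Finset.Icc p q, e k) * (∑ k ∈ Finset.Icc p q, (e k)⁻¹) ≤
        (M ^ 4 * C * ((N : ℝ)) ^ 2) * ((q - p + 1 : ℤ) : ℝ) ^ 2 := by
  intro p q hpq
  have hM0 : (0 : ℝ) < M := lt_of_lt_of_le one_pos hM
  -- telescoping gap bound
  have hkey : ∀ j : ℤ, p ≤ j → nk j - nk p ≤ N * (j - p) := by
    intro j hj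
    refine Int.le_induction (m := p) (motive := fun j _ => nk j - nk p ≤ N * (j - p)) ?_ ?_ j hj
    · simp
    · intro j hj ih
      have h := hgap j
      have h2 : nk (j + 1) - nk p ≤ N * (j - p) + N := by linarith
      calc nk (j + 1) - nk p ≤ N * (j - p) + N := h2
        _ = N * (j + 1 - p) := by ring
  -- sums over image bound
  have himg : (Finset.Icc p q).image nk ⊆ Finset.Icc (nk p) (nk q) := by
    intro n hn
    simp only [Finset.mem_image, Finset.mem_Icc] at hn ⊢
    obtain ⟨k, ⟨h1, h2⟩, rfl⟩ := hn
    exact ⟨hnk.monotone h1, hnk.monotone h2⟩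
  have hsum : ∀ f : ℤ → ℝ, (∀ n, 0 ≤ f n) →
      (∑ k ∈ Finset.Icc p q, f (nk k)) ≤ ∑ n ∈ Finset.Icc (nk p) (nk q), f n := by
    intro f hf
    rw [← Finset.sum_image (fun a _ b _ h => hnk.injective h)]
    exact Finset.sum_le_sum_of_subset_of_nonneg himg (fun n _ _ => hf n)
  have hd1 := hsum d (fun n => (hd n).le)
  have hd2 := hsum (fun n => (d n)⁻¹) (fun n => (inv_nonneg.mpr (hd n).le))
  -- e bounds
  have he1 : (∑ k ∈ Finset.Icc p q, e k) ≤ M * ∑ k ∈ Finset.Icc p q, d (nk k) := by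
    rw [Finset.mul_sum]
    exact Finset.sum_le_sum fun k _ => (hcomp k).2
  have he2 : (∑ k ∈ Finset.Icc p q, (e k)⁻¹) ≤ M * ∑ k ∈ Finset.Icc p q, (d (nk k))⁻¹ := by
    rw [Finset.mul_sum]
    refine Finset.sum_le_sum fun k _ => ?_
    have h := (hcomp k).1
    have hdk := hd (nk k)
    have hpos : (0:ℝ) < M⁻¹ * d (nk k) := by positivity
    have h2 : (e k)⁻¹ ≤ (M⁻¹ * d (nk k))⁻¹ := inv_anti₀ hpos h
    rwa [mul_inv, inv_inv] at h2
  -- main estimate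
  have hA := hA2 (nk p) (nk q) (hnk.monotone hpq)
  have hL : ((nk q - nk p + 1 : ℤ) : ℝ) ≤ (N : ℝ) * ((q - p + 1 : ℤ) : ℝ) := by
    have h1 := hkey q hpq
    have : (nk q - nk p + 1 : ℤ) ≤ N * (q - p + 1) := by nlinarith
    calc ((nk q - nk p + 1 : ℤ) : ℝ) ≤ ((N * (q - p + 1) : ℤ) : ℝ) := by exact_mod_cast this
      _ = (N : ℝ) * ((q - p + 1 : ℤ) : ℝ) := by push_cast; ring
  have hLpos : (0 : ℝ) ≤ ((nk q - nk p + 1 : ℤ) : ℝ) := by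
    have : nk p ≤ nk q := hnk.monotone hpq
    exact_mod_cast by linarith
  have hsq : ((nk q - nk p + 1 : ℤ) : ℝ) ^ 2 ≤ (N : ℝ) ^ 2 * ((q - p + 1 : ℤ) : ℝ) ^ 2 := by
    have := mul_self_le_mul_self hLpos hL
    nlinarith
  have hSdpos : (0 : ℝ) ≤ ∑ k ∈ Finset.Icc p q, d (nk k) :=
    Finset.sum_nonneg fun k _ => (hd (nk k)).le
  have hSipos : (0 : ℝ) ≤ ∑ k ∈ Finset.Icc p q, (d (nk k))⁻¹ :=
    Finset.sum_nonneg fun k _ => inv_nonneg.mpr (hd (nk k)).le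
  have hepos : (0 : ℝ) ≤ ∑ k ∈ Finset.Icc p q, e k :=
    Finset.sum_nonneg fun k _ => (he k).le
  have heipos : (0 : ℝ) ≤ ∑ k ∈ Finset.Icc p q, (e k)⁻¹ :=
    Finset.sum_nonneg fun k _ => inv_nonneg.mpr (he k).le
  have step1 : (∑ k ∈ Finset.Icc p q, e k) * (∑ k ∈ Finset.Icc p q, (e k)⁻¹) ≤
      M ^ 2 * ((∑ k ∈ Finset.Icc p q, d (nk k)) * (∑ k ∈ Finset.Icc p q, (d (nk k))⁻¹)) := by
    calc (∑ k ∈ Finset.Icc p q, e k) * (∑ k ∈ Finset.Icc p q, (e k)⁻¹)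
        ≤ (M * ∑ k ∈ Finset.Icc p q, d (nk k)) * (M * ∑ k ∈ Finset.Icc p q, (d (nk k))⁻¹) :=
          mul_le_mul he1 he2 heipos (by positivity)
      _ = M ^ 2 * ((∑ k ∈ Finset.Icc p q, d (nk k)) * (∑ k ∈ Finset.Icc p q, (d (nk k))⁻¹)) := by
          ring
  have step2 : (∑ k ∈ Finset.Icc p q, d (nk k)) * (∑ k ∈ Finset.Icc p q, (d (nk k))⁻¹) ≤
      C * ((nk q - nk p + 1 : ℤ) : ℝ) ^ 2 := by
    calc (∑ k ∈ Finset.Icc p q, d (nk k)) * (∑ k ∈ Finset.Icc p q, (d (nk k))⁻¹)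
        ≤ (∑ n ∈ Finset.Icc (nk p) (nk q), d n) * (∑ n ∈ Finset.Icc (nk p) (nk q), (d n)⁻¹) :=
          mul_le_mul hd1 hd2 hSipos (Finset.sum_nonneg fun n _ => (hd n).le)
      _ ≤ C * ((nk q - nk p + 1 : ℤ) : ℝ) ^ 2 := hA
  have hM2 : M ^ 2 ≤ M ^ 4 := by nlinarith [sq_nonneg (M^2 - 1), sq_nonneg M]
  calc (∑ k ∈ Finset.Icc p q, e k) * (∑ k ∈ Finset.Icc p q, (e k)⁻¹)
      ≤ M ^ 2 * (C * ((nk q - nk p + 1 : ℤ) : ℝ) ^ 2) :=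
        step1.trans (by nlinarith)
    _ ≤ M ^ 2 * (C * ((N : ℝ) ^ 2 * ((q - p + 1 : ℤ) : ℝ) ^ 2)) := by
        have := mul_le_mul_of_nonneg_left hsq hC.le
        nlinarith
    _ ≤ M ^ 4 * (C * ((N : ℝ) ^ 2 * ((q - p + 1 : ℤ) : ℝ) ^ 2)) :=
        mul_le_mul_of_nonneg_right hM2 (by positivity)
    _ = (M ^ 4 * C * ((N : ℝ)) ^ 2) * ((q - p + 1 : ℤ) : ℝ) ^ 2 := by ring
end
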